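/- Let (G_k)_{k≥1} be independent random variables where G_k is geometric with success probability p_{c(k)} ∈ (0,1], and the labels c(k) take finitely many values 1,…,K with empirical frequencies (1/n)·#{k ≤ n : c(k) = j} → i(j) for each j. Then (1/n)·∑_{k≤n} G_k → ∑_j i(j)/p_j almost surely. -/

import Mathlib

/-!
Split the indices by label. Along the indices carrying label `j` the variables `G_k` are i.i.d.
geometric with mean `1 / p_j`, so by the strong law of large numbers their running averages tend
to `1 / p_j`; since the `j`-labelled indices up to `n` number about `i(j) n`, the `j`-part of the
sum, divided by `n`, tends to `i(j) / p_j`. A label that occurs only finitely often has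
`i(j) = 0` and contributes a bounded, hence negligible, amount. Summing over the finitely many
labels gives the claim.
-/

open Filter MeasureTheory ProbabilityTheory
open scoped ENNReal Topology

section Geometric

variable {Ω : Type*} [MeasurableSpace Ω]

/-- Geometric law on `{1, 2, …}`; the mass at `0` is left unconstrained. -/
def HasGeometricLaw (μ : Measure Ω) (X : Ω → ℕ) (q : ℝ) : Prop :=
  ∀ m : ℕ, 1 ≤ m → μ {ω | X ω = m} = ENNReal.ofReal (q * (1 - q) ^ (m - 1))

lemma hasSum_natCast_mul_geometric_law {q : ℝ} (hq₀ : 0 < q) (hq₂ : q < 2) :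
    HasSum (fun m : ℕ => (m : ℝ) * (q * (1 - q) ^ (m - 1))) q⁻¹ := by
  have hr : ‖1 - q‖ < 1 := by
    rw [Real.norm_eq_abs, abs_lt]; constructor <;> linarith
  have hshift : HasSum (fun n : ℕ => ((n + 1 : ℕ) : ℝ) * (q * (1 - q) ^ (n + 1 - 1))) q⁻¹ := by
    have h := ((hasSum_coe_mul_geometric_of_norm_lt_one hr).add
      (hasSum_geometric_of_norm_lt_one hr)).mul_left q
    have hval : q * ((1 - q) / (1 - (1 - q)) ^ 2 + (1 - (1 - q))⁻¹) = q⁻¹ := by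
      rw [sub_sub_cancel]; field_simp; ring
    rw [hval] at h
    refine h.congr_fun fun n => ?_
    simp only [Nat.add_sub_cancel, Nat.cast_add, Nat.cast_one]
    ring
  simpa using (hasSum_nat_add_iff (f := fun m : ℕ => (m : ℝ) * (q * (1 - q) ^ (m - 1))) 1).1 hshift

variable {μ : Measure Ω} {X : Ω → ℕ} {q : ℝ}

lemma HasGeometricLaw.lintegral_eq (hX : HasGeometricLaw μ X q) (hXm : Measurable X)
    (hq : q ∈ Set.Ioc 0 1) : ∫⁻ ω, (X ω : ℝ≥0∞) ∂μ = ENNReal.ofReal q⁻¹ := by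
  have hsum := hasSum_natCast_mul_geometric_law hq.1 (by linarith [hq.2])
  have hterm (m : ℕ) : (m : ℝ≥0∞) * μ.map X {m} =
      ENNReal.ofReal ((m : ℝ) * (q * (1 - q) ^ (m - 1))) := by
    rcases Nat.eq_zero_or_pos m with rfl | hm
    · simp
    · rw [Measure.map_apply hXm (measurableSet_singleton m), ← ENNReal.ofReal_natCast,
        show μ (X ⁻¹' {m}) = _ from hX m hm, ← ENNReal.ofReal_mul (Nat.cast_nonneg m)]
  have hnonneg (m : ℕ) : 0 ≤ (m : ℝ) * (q * (1 - q) ^ (m - 1)) :=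
    mul_nonneg m.cast_nonneg (mul_nonneg hq.1.le (pow_nonneg (sub_nonneg.2 hq.2) _))
  rw [← lintegral_map measurable_from_top hXm, lintegral_countable', tsum_congr hterm,
    ← ENNReal.ofReal_tsum_of_nonneg hnonneg hsum.summable, hsum.tsum_eq]

lemma HasGeometricLaw.integrable (hX : HasGeometricLaw μ X q) (hXm : Measurable X)
    (hq : q ∈ Set.Ioc 0 1) : Integrable (fun ω => (X ω : ℝ)) μ := by
  refine ⟨(measurable_from_top.comp hXm).aestronglyMeasurable, ?_⟩
  rw [hasFiniteIntegral_iff_ofReal (Eventually.of_forall fun ω => by positivity)]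
  simp_rw [ENNReal.ofReal_natCast, hX.lintegral_eq hXm hq]
  exact ENNReal.ofReal_lt_top

lemma HasGeometricLaw.integral_eq (hX : HasGeometricLaw μ X q) (hXm : Measurable X)
    (hq : q ∈ Set.Ioc 0 1) : ∫ ω, (X ω : ℝ) ∂μ = q⁻¹ := by
  have hXm' : Measurable fun ω => (X ω : ℝ) := measurable_from_top.comp hXm
  rw [integral_eq_lintegral_of_nonneg_ae (Eventually.of_forall fun ω => by positivity)
    hXm'.aestronglyMeasurable]
  simp_rw [ENNReal.ofReal_natCast, hX.lintegral_eq hXm hq]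
  exact ENNReal.toReal_ofReal (inv_nonneg.2 hq.1.le)

lemma HasGeometricLaw.identDistrib {Ω' : Type*} [MeasurableSpace Ω'] {ν : Measure Ω'}
    {Y : Ω' → ℕ} (hX : HasGeometricLaw μ X q) (hY : HasGeometricLaw ν Y q)
    (hXm : Measurable X) (hYm : Measurable Y)
    (hX₁ : ∀ᵐ ω ∂μ, 1 ≤ X ω) (hY₁ : ∀ᵐ ω ∂ν, 1 ≤ Y ω) : IdentDistrib X Y μ ν := by
  refine ⟨hXm.aemeasurable, hYm.aemeasurable, Measure.ext_of_singleton fun m => ?_⟩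
  rw [Measure.map_apply hXm (measurableSet_singleton m),
    Measure.map_apply hYm (measurableSet_singleton m)]
  rcases Nat.eq_zero_or_pos m with rfl | hm
  · rw [show μ (X ⁻¹' {0}) = 0 from
        measure_mono_null (fun ω (h : X ω = 0) => show ¬1 ≤ X ω by omega) hX₁,
      show ν (Y ⁻¹' {0}) = 0 from
        measure_mono_null (fun ω (h : Y ω = 0) => show ¬1 ≤ Y ω by omega) hY₁]
  · exact (hX m hm).trans (hY m hm).symm

end Geometric

section Density

variable {p : ℕ → Prop} [DecidablePred p]

lemma sum_filter_range_eq_sum_range_count {M : Type*} [AddCommMonoid M] (f : ℕ → M) (n : ℕ) :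
    ∑ k ∈ (Finset.range n).filter p, f k = ∑ l ∈ Finset.range (Nat.count p n), f (Nat.nth p l) := by
  induction n with
  | zero => simp
  | succ n ih =>
    rw [Finset.range_add_one, Finset.filter_insert, Nat.count_succ]
    by_cases hn : p n
    · rw [if_pos hn, if_pos hn, Finset.sum_insert (by simp), Finset.sum_range_succ,
        Nat.nth_count hn, ih, add_comm]
    · simp [hn, ih]

lemma tendsto_sum_filter_range_div_of_finite (hp : {k | p k}.Finite) (x : ℕ → ℝ) :
    Tendsto (fun n : ℕ => (∑ k ∈ (Finset.range n).filter p, x k) / n) atTop (𝓝 0) := by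
  obtain ⟨b, hb⟩ := hp.bddAbove
  have hstable : ∀ n, b < n → (Finset.range n).filter p = (Finset.range (b + 1)).filter p := by
    intro n hn
    ext k
    simp only [Finset.mem_filter, Finset.mem_range]
    exact ⟨fun h => ⟨Nat.lt_succ_of_le (hb h.2), h.2⟩, fun h => ⟨by omega, h.2⟩⟩
  refine (tendsto_const_div_atTop_nhds_zero_nat
    (∑ k ∈ (Finset.range (b + 1)).filter p, x k)).congr' ?_
  filter_upwards [eventually_gt_atTop b] with n hn
  rw [hstable n hn]

lemma tendsto_sum_filter_range_div_of_infinite (hp : {k | p k}.Infinite) {d a : ℝ}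
    (hd : Tendsto (fun n : ℕ => (Nat.count p n : ℝ) / n) atTop (𝓝 d)) {x : ℕ → ℝ}
    (hx : Tendsto (fun n : ℕ => (∑ l ∈ Finset.range n, x (Nat.nth p l)) / n) atTop (𝓝 a)) :
    Tendsto (fun n : ℕ => (∑ k ∈ (Finset.range n).filter p, x k) / n) atTop (𝓝 (d * a)) := by
  have hcount : Tendsto (Nat.count p) atTop atTop :=
    tendsto_atTop_atTop_of_monotone (Nat.count_monotone p) fun b =>
      ⟨Nat.nth p b + 1, (Nat.count_nth_succ_of_infinite hp b).ge.trans' (Nat.le_succ b)⟩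
  refine (hd.mul (hx.comp hcount)).congr fun n => ?_
  simp only [Function.comp_apply, sum_filter_range_eq_sum_range_count]
  rcases Nat.eq_zero_or_pos (Nat.count p n) with h | h
  · simp [h]
  · have : (Nat.count p n : ℝ) ≠ 0 := by positivity
    field_simp

lemma tendsto_sum_filter_range_div {d a : ℝ}
    (hd : Tendsto (fun n : ℕ => (Nat.count p n : ℝ) / n) atTop (𝓝 d)) {x : ℕ → ℝ}
    (hx : {k | p k}.Infinite →
      Tendsto (fun n : ℕ => (∑ l ∈ Finset.range n, x (Nat.nth p l)) / n) atTop (𝓝 a)) :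
    Tendsto (fun n : ℕ => (∑ k ∈ (Finset.range n).filter p, x k) / n) atTop (𝓝 (d * a)) := by
  by_cases hp : {k | p k}.Infinite
  · exact tendsto_sum_filter_range_div_of_infinite hp hd (hx hp)
  · rw [Set.not_infinite] at hp
    have hd₀ : d = 0 := by
      refine tendsto_nhds_unique hd ((tendsto_sum_filter_range_div_of_finite hp 1).congr ?_)
      intro n
      simp [Nat.count_eq_card_filter_range]
    rw [hd₀, zero_mul]
    exact tendsto_sum_filter_range_div_of_finite hp x

end Density

theorem ae_tendsto_sum_filter_range_div {Ω : Type*} [MeasurableSpace Ω] {μ : Measure Ω}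
    {X : ℕ → Ω → ℝ} (hindep : Pairwise fun k l => IndepFun (X k) (X l) μ)
    {p : ℕ → Prop} [DecidablePred p] {d a : ℝ}
    (hd : Tendsto (fun n : ℕ => (Nat.count p n : ℝ) / n) atTop (𝓝 d))
    (hint : ∀ k, p k → Integrable (X k) μ) (hmean : ∀ k, p k → μ[X k] = a)
    (hident : ∀ k l, p k → p l → IdentDistrib (X k) (X l) μ μ) :
    ∀ᵐ ω ∂μ, Tendsto (fun n : ℕ => (∑ k ∈ (Finset.range n).filter p, X k ω) / n) atTop
      (𝓝 (d * a)) := by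
  by_cases hp : {k | p k}.Infinite
  · have hmem : ∀ l, p (Nat.nth p l) := Nat.nth_mem_of_infinite hp
    have hslln := strong_law_ae_real (fun l => X (Nat.nth p l)) (hint _ (hmem 0))
      (fun l l' hll' => hindep fun h => hll' ((Nat.nth_strictMono hp).injective h))
      (fun l => hident _ _ (hmem l) (hmem 0))
    rw [hmean _ (hmem 0)] at hslln
    filter_upwards [hslln] with ω hω
    exact tendsto_sum_filter_range_div hd fun _ => hω
  · exact Eventually.of_forall fun ω => tendsto_sum_filter_range_div hd fun h => absurd h hp

theorem stmt12_general {Ω : Type*} [MeasurableSpace Ω] (μ : Measure Ω)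
    (K : ℕ) (p : Fin K → ℝ) (hp : ∀ j, p j ∈ Set.Ioc (0:ℝ) 1)
    (c : ℕ → Fin K) (i : Fin K → ℝ)
    (hfreq : ∀ j, Tendsto
      (fun n : ℕ => (((Finset.range n).filter (fun k => c k = j)).card : ℝ) / n)
      atTop (nhds (i j)))
    (G : ℕ → Ω → ℕ) (hmeas : ∀ k, Measurable (G k))
    (hindep : iIndepFun G μ)
    (hgeom : ∀ k, ∀ m : ℕ, 1 ≤ m →
      μ {ω | G k ω = m} = ENNReal.ofReal (p (c k) * (1 - p (c k)) ^ (m - 1)))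
    (hpos : ∀ k, ∀ᵐ ω ∂μ, 1 ≤ G k ω) :
    ∀ᵐ ω ∂μ,
      Tendsto (fun n : ℕ => (∑ k ∈ Finset.range n, (G k ω : ℝ)) / n) atTop
        (nhds (∑ j, i j / p j)) := by
  have hlaw (j : Fin K) (k : ℕ) (hk : c k = j) : HasGeometricLaw μ (G k) (p j) := hk ▸ hgeom k
  have hlabel (j : Fin K) : ∀ᵐ ω ∂μ, Tendsto
      (fun n : ℕ => (∑ k ∈ (Finset.range n).filter (c · = j), (G k ω : ℝ)) / n) atTop
      (𝓝 (i j * (p j)⁻¹)) :=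
    ae_tendsto_sum_filter_range_div
      (fun k l hkl => (hindep.indepFun hkl).comp measurable_from_top measurable_from_top)
      ((hfreq j).congr fun n => by rw [Nat.count_eq_card_filter_range])
      (fun k hk => (hlaw j k hk).integrable (hmeas k) (hp j))
      (fun k hk => (hlaw j k hk).integral_eq (hmeas k) (hp j))
      (fun k l hk hl => ((hlaw j k hk).identDistrib (hlaw j l hl) (hmeas k) (hmeas l)
        (hpos k) (hpos l)).comp measurable_from_top)
  filter_upwards [ae_all_iff.2 hlabel] with ω hω
  simp_rw [div_eq_mul_inv (i _)]
  refine (tendsto_finsetSum Finset.univ fun j _ => hω j).congr fun n => ?_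
  rw [← Finset.sum_div, Finset.sum_fiberwise]

theorem stmt12 {Ω : Type*} [MeasurableSpace Ω] (μ : Measure Ω) [IsProbabilityMeasure μ]
    (K : ℕ) (p : Fin K → ℝ) (hp : ∀ j, p j ∈ Set.Ioc (0:ℝ) 1)
    (c : ℕ → Fin K) (i : Fin K → ℝ)
    (hfreq : ∀ j, Tendsto
      (fun n : ℕ => (((Finset.range n).filter (fun k => c k = j)).card : ℝ) / n)
      atTop (nhds (i j)))
    (G : ℕ → Ω → ℕ) (hmeas : ∀ k, Measurable (G k))
    (hindep : iIndepFun G μ)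
    (hgeom : ∀ k, ∀ m : ℕ, 1 ≤ m →
      μ {ω | G k ω = m} = ENNReal.ofReal (p (c k) * (1 - p (c k)) ^ (m - 1)))
    (hpos : ∀ k, ∀ᵐ ω ∂μ, 1 ≤ G k ω) :
    ∀ᵐ ω ∂μ,
      Tendsto (fun n : ℕ => (∑ k ∈ Finset.range n, (G k ω : ℝ)) / n) atTop
        (nhds (∑ j, i j / p j)) :=
  stmt12_general μ K p hp c i hfreq G hmeas hindep hgeom hpos
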